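/- Let Φ be a reduced root system with positive roots Φ⁺, M a ℤ-module, and ω a 2-cocycle on Φ with values in M. If ω(α|β) = 0 for all pairs of positive roots α,β ∈ Φ⁺ with α+β ∈ Φ₀, and ω(α|−α) = 0 for all α ∈ Φ, then ω = 0, i.e., ω(α|β) = 0 for all α,β ∈ Φ with α+β ∈ Φ₀. -/

import Mathlib

open scoped RealInnerProductSpace

/-- A reduced root system `Φ` in a real inner product space `V`:
a finite set of nonzero vectors spanning `V`, closed under the reflections it determines,
with integral Cartan numbers, such that the only multiples of a root in `Φ` are `±α`. -/
structure ReducedRootSystem (V : Type) [NormedAddCommGroup V] [InnerProductSpace ℝ V] :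
    Type where
  roots : Set V
  finite : roots.Finite
  nonzero : ∀ α ∈ roots, α ≠ 0
  spans : Submodule.span ℝ roots = ⊤
  reflect_mem : ∀ α ∈ roots, ∀ β ∈ roots, β - (2 * ⟪β, α⟫ / ⟪α, α⟫) • α ∈ roots
  integral : ∀ α ∈ roots, ∀ β ∈ roots, ∃ n : ℤ, 2 * ⟪β, α⟫ / ⟪α, α⟫ = (n : ℝ)
  reduced : ∀ α ∈ roots, ∀ t : ℝ, t • α ∈ roots → t = 1 ∨ t = -1

variable {V : Type} [NormedAddCommGroup V] [InnerProductSpace ℝ V]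

/-- `Φ₀ = Φ ∪ {0}`. -/
def rootsZero (Φ : ReducedRootSystem V) : Set V := insert 0 Φ.roots

/-- The positive roots with respect to a linear functional `f` (nonvanishing on `Φ`). -/
def posRoots (Φ : ReducedRootSystem V) (f : V →ₗ[ℝ] ℝ) : Set V :=
  {α | α ∈ Φ.roots ∧ 0 < f α}

/-- The simple roots: positive roots that are not the sum of two positive roots. -/
def simpleRoots (Φ : ReducedRootSystem V) (f : V →ₗ[ℝ] ℝ) : Set V :=
  {α | α ∈ posRoots Φ f ∧ ¬ ∃ β ∈ posRoots Φ f, ∃ γ ∈ posRoots Φ f, α = β + γ}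

/-!
On a set `S ∋ 0` closed under negation, a 2-cocycle `ω` with `ω(x|-x) = 0` is invariant under
cyclic permutation of any triple `α + β + γ = 0` (in the cocycle identity for such a triple the
two middle terms have the form `ω(x|-x)`), and `ω(α|β) = -ω(-β|-α)`. Given two roots with
`α + β ≠ 0`, the three roots `α, β, -(α + β)` sum to zero, so two cyclically consecutive ones have
the same sign under `f`; by the cyclic symmetry `ω(α|β)` equals `ω` of that pair, which vanishes
either by hypothesis or, for a negative pair, by the second identity.
-/

theorem mul_pos_of_add_add_eq_zero {a b c : ℝ} (ha : a ≠ 0) (hb : b ≠ 0) (hc : c ≠ 0)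
    (hsum : a + b + c = 0) : 0 < a * b ∨ 0 < b * c ∨ 0 < c * a := by
  rcases ha.lt_or_gt with ha | ha <;> rcases hb.lt_or_gt with hb | hb <;>
    rcases hc.lt_or_gt with hc | hc <;>
    first
    | exact absurd hsum (by linarith)
    | exact Or.inl (by nlinarith)
    | exact Or.inr (Or.inl (by nlinarith))
    | exact Or.inr (Or.inr (by nlinarith))

section Cocycle

variable {G M : Type*} [AddCommGroup G] [AddCommGroup M] {S : Set G} {ω : G → G → M}

def IsTwoCocycleOn (S : Set G) (ω : G → G → M) : Prop :=
  ∀ α ∈ S, ∀ β ∈ S, ∀ γ ∈ S, α + β ∈ S → β + γ ∈ S → α + β + γ ∈ S →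
    ω β γ - ω (α + β) γ + ω α (β + γ) - ω α β = 0

theorem IsTwoCocycleOn.apply_eq_apply_of_add_add_eq_zero (hω : IsTwoCocycleOn S ω)
    (hS0 : 0 ∈ S) (hSneg : ∀ x ∈ S, -x ∈ S) (hopp : ∀ x ∈ S, ω x (-x) = 0) ⦃α β γ : G⦄
    (hα : α ∈ S) (hβ : β ∈ S) (hγ : γ ∈ S) (hsum : α + β + γ = 0) : ω α β = ω β γ := by
  have hαβ : α + β = -γ := eq_neg_of_add_eq_zero_left hsum
  have hβγ : β + γ = -α := eq_neg_of_add_eq_zero_right (by rwa [← add_assoc])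
  have h := hω α hα β hβ γ hγ (hαβ ▸ hSneg γ hγ) (hβγ ▸ hSneg α hα) (hsum ▸ hS0)
  have hγ' : ω (-γ) γ = 0 := by simpa using hopp (-γ) (hSneg γ hγ)
  rw [hαβ, hβγ, hopp α hα, hγ'] at h
  simpa [sub_eq_zero, eq_comm] using h

theorem IsTwoCocycleOn.apply_eq_neg_apply_neg_neg (hω : IsTwoCocycleOn S ω) (hS0 : 0 ∈ S)
    (hSneg : ∀ x ∈ S, -x ∈ S) (hopp : ∀ x ∈ S, ω x (-x) = 0) (hz : ∀ x ∈ S, ω 0 x = 0)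
    {α β : G} (hα : α ∈ S) (hβ : β ∈ S) (hαβ : α + β ∈ S) : ω α β = -ω (-β) (-α) := by
  have hcyc := hω.apply_eq_apply_of_add_add_eq_zero hS0 hSneg hopp
  have h := hω (-α) (hSneg α hα) α hα β hβ (by simpa using hS0) hαβ (by simpa using hβ)
  have hα' : ω (-α) α = 0 := by simpa using hopp (-α) (hSneg α hα)
  have hrot : ω (-α) (α + β) = ω (-β) (-α) :=
    (hcyc (hSneg α hα) hαβ (hSneg β hβ) (by abel)).trans
      (hcyc hαβ (hSneg β hβ) (hSneg α hα) (by abel))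
  rw [neg_add_cancel, hz β hβ, hα', hrot] at h
  exact eq_neg_of_add_eq_zero_left (by simpa using h)

theorem IsTwoCocycleOn.apply_eq_zero_of_mul_pos (hω : IsTwoCocycleOn S ω) (hS0 : 0 ∈ S)
    (hSneg : ∀ x ∈ S, -x ∈ S) (hopp : ∀ x ∈ S, ω x (-x) = 0) (hz : ∀ x ∈ S, ω 0 x = 0)
    (f : G →+ ℝ) (hpos : ∀ α ∈ S, ∀ β ∈ S, 0 < f α → 0 < f β → α + β ∈ S → ω α β = 0)
    ⦃α β : G⦄ (hα : α ∈ S) (hβ : β ∈ S) (hαβ : α + β ∈ S) (hsign : 0 < f α * f β) :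
    ω α β = 0 := by
  rcases pos_and_pos_or_neg_and_neg_of_mul_pos hsign with ⟨hfα, hfβ⟩ | ⟨hfα, hfβ⟩
  · exact hpos α hα β hβ hfα hfβ hαβ
  · have hβα : -β + -α ∈ S := by simpa [add_comm] using hSneg _ hαβ
    rw [hω.apply_eq_neg_apply_neg_neg hS0 hSneg hopp hz hα hβ hαβ,
      hpos (-β) (hSneg β hβ) (-α) (hSneg α hα) (by simpa using hfβ) (by simpa using hfα) hβα,
      neg_zero]

theorem IsTwoCocycleOn.apply_eq_zero_of_pos (hω : IsTwoCocycleOn S ω) (hS0 : 0 ∈ S)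
    (hSneg : ∀ x ∈ S, -x ∈ S) (hopp : ∀ x ∈ S, ω x (-x) = 0) (hz : ∀ x ∈ S, ω 0 x = 0)
    (f : G →+ ℝ) (hf : ∀ x ∈ S, x ≠ 0 → f x ≠ 0)
    (hpos : ∀ α ∈ S, ∀ β ∈ S, 0 < f α → 0 < f β → α + β ∈ S → ω α β = 0)
    {α β : G} (hα : α ∈ S) (hβ : β ∈ S) (hα0 : α ≠ 0) (hβ0 : β ≠ 0) (hαβ : α + β ∈ S) :
    ω α β = 0 := by
  by_cases hαβ0 : α + β = 0
  · rw [← neg_eq_of_add_eq_zero_right hαβ0]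
    exact hopp α hα
  have hsame := hω.apply_eq_zero_of_mul_pos hS0 hSneg hopp hz f hpos
  have hcyc := hω.apply_eq_apply_of_add_add_eq_zero hS0 hSneg hopp
  set γ := -(α + β) with hγ_def
  have hγ : γ ∈ S := hSneg _ hαβ
  have hsum : α + β + γ = 0 := add_neg_cancel _
  have hfsum : f α + f β + f γ = 0 := by rw [← map_add, ← map_add, hsum, map_zero]
  rcases mul_pos_of_add_add_eq_zero (hf α hα hα0) (hf β hβ hβ0) (hf γ hγ (neg_ne_zero.2 hαβ0))
    hfsum with h | h | h
  · exact hsame hα hβ hαβ h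
  · rw [hcyc hα hβ hγ hsum]
    exact hsame hβ hγ (by simpa [hγ_def] using hSneg _ hα) h
  · rw [hcyc hα hβ hγ hsum, hcyc hβ hγ hα (by rw [← hsum]; abel)]
    exact hsame hγ hα (by simpa [hγ_def] using hSneg _ hβ) h

end Cocycle

namespace ReducedRootSystem

theorem neg_mem (Φ : ReducedRootSystem V) {α : V} (hα : α ∈ Φ.roots) : -α ∈ Φ.roots := by
  have h := Φ.reflect_mem α hα α hα
  rwa [mul_div_assoc, div_self (inner_self_ne_zero.mpr (Φ.nonzero α hα)), mul_one, two_smul,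
    sub_add_cancel_left] at h

theorem zero_mem_rootsZero (Φ : ReducedRootSystem V) : 0 ∈ rootsZero Φ :=
  Set.mem_insert _ _

theorem neg_mem_rootsZero (Φ : ReducedRootSystem V) {α : V} (hα : α ∈ rootsZero Φ) :
    -α ∈ rootsZero Φ := by
  rcases hα with rfl | hα
  · rw [neg_zero]
    exact Φ.zero_mem_rootsZero
  · exact Or.inr (Φ.neg_mem hα)

theorem mem_posRoots_of_mem_rootsZero (Φ : ReducedRootSystem V) {f : V →ₗ[ℝ] ℝ} {α : V}
    (hα : α ∈ rootsZero Φ) (hfα : 0 < f α) : α ∈ posRoots Φ f := by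
  rcases hα with rfl | hα
  · simp at hfα
  · exact ⟨hα, hfα⟩

end ReducedRootSystem

theorem two_cocycle_vanishing_general
    {V : Type} [NormedAddCommGroup V] [InnerProductSpace ℝ V]
    (Φ : ReducedRootSystem V) (f : V →ₗ[ℝ] ℝ) (hf : ∀ α ∈ Φ.roots, f α ≠ 0)
    (M : Type) [AddCommGroup M]
    (ω : V → V → M)
    (hz : ∀ v : V, ω 0 v = 0)
    (hcoc : ∀ α ∈ rootsZero Φ, ∀ β ∈ rootsZero Φ, ∀ γ ∈ rootsZero Φ,
      α + β ∈ rootsZero Φ → β + γ ∈ rootsZero Φ → α + β + γ ∈ rootsZero Φ →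
      ω β γ - ω (α + β) γ + ω α (β + γ) - ω α β = 0)
    (hpos : ∀ α ∈ posRoots Φ f, ∀ β ∈ posRoots Φ f, α + β ∈ rootsZero Φ → ω α β = 0)
    (hopp : ∀ α ∈ Φ.roots, ω α (-α) = 0) :
    ∀ α ∈ Φ.roots, ∀ β ∈ Φ.roots, α + β ∈ rootsZero Φ → ω α β = 0 := by
  have hω : IsTwoCocycleOn (rootsZero Φ) ω := hcoc
  have hopp₀ : ∀ x ∈ rootsZero Φ, ω x (-x) = 0 := by
    rintro x (rfl | hx)
    exacts [hz _, hopp x hx]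
  have hf₀ : ∀ x ∈ rootsZero Φ, x ≠ 0 → f x ≠ 0 := by
    rintro x (rfl | hx) hx0
    exacts [absurd rfl hx0, hf x hx]
  intro α hα β hβ hαβ
  exact hω.apply_eq_zero_of_pos Φ.zero_mem_rootsZero (fun _ ↦ Φ.neg_mem_rootsZero) hopp₀
    (fun x _ ↦ hz x) f.toAddMonoidHom hf₀
    (fun α hα β hβ hfα hfβ ↦ hpos α (Φ.mem_posRoots_of_mem_rootsZero hα hfα)
      β (Φ.mem_posRoots_of_mem_rootsZero hβ hfβ))
    (Or.inr hα) (Or.inr hβ) (Φ.nonzero α hα) (Φ.nonzero β hβ) hαβ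

/-- A 2-cocycle on `Φ` with values in a ℤ-module `M` which vanishes on all
pairs of positive roots (whose sum lies in `Φ₀`) and on all pairs of opposite roots vanishes
identically. -/
theorem two_cocycle_vanishing
    {V : Type} [NormedAddCommGroup V] [InnerProductSpace ℝ V] [FiniteDimensional ℝ V]
    (Φ : ReducedRootSystem V) (f : V →ₗ[ℝ] ℝ) (hf : ∀ α ∈ Φ.roots, f α ≠ 0)
    (M : Type) [AddCommGroup M]
    (ω : V → V → M)
    (hz : ∀ v : V, ω 0 v = 0) (hz' : ∀ v : V, ω v 0 = 0)
    (hcoc : ∀ α ∈ rootsZero Φ, ∀ β ∈ rootsZero Φ, ∀ γ ∈ rootsZero Φ,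
      α + β ∈ rootsZero Φ → β + γ ∈ rootsZero Φ → α + β + γ ∈ rootsZero Φ →
      ω β γ - ω (α + β) γ + ω α (β + γ) - ω α β = 0)
    (hpos : ∀ α ∈ posRoots Φ f, ∀ β ∈ posRoots Φ f, α + β ∈ rootsZero Φ → ω α β = 0)
    (hopp : ∀ α ∈ Φ.roots, ω α (-α) = 0) :
    ∀ α ∈ Φ.roots, ∀ β ∈ Φ.roots, α + β ∈ rootsZero Φ → ω α β = 0 :=
  two_cocycle_vanishing_general Φ f hf M ω hz hcoc hpos hopp
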